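/- arXiv:1507.06187 — 3 statements merged into one kernel-verified Lean document; each statement's English description precedes it below -/
import Mathlib

section
/- If the edges of the complete graph on ℕ are 2-coloured, then the vertices can be partitioned into two disjoint sets, one of which carries a monochromatic path in colour 0 and the other a monochromatic path in colour 1 (either part may be empty or finite). -/
open Cardinal

universe u

variable {V : Type u}

/-- Two walks between the same endpoints intersect only in the endpoints. -/
def IntDisjoint {G : SimpleGraph V} {v w : V} (p q : G.Walk v w) : Prop :=
  ∀ x, x ∈ p.support → x ∈ q.support → x = v ∨ x = w

/-- `A` is κ-unseparable in `G`: any two distinct vertices of `A` are joined by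
κ-many pairwise internally disjoint finite paths. -/
def Unseparable (G : SimpleGraph V) (A : Set V) (κ : Cardinal.{u}) : Prop :=
  ∀ v ∈ A, ∀ w ∈ A, v ≠ w →
    ∃ P : Set (G.Path v w), κ ≤ #P ∧
      ∀ p ∈ P, ∀ q ∈ P, p ≠ q → IntDisjoint (p : G.Path v w).1 (q : G.Path v w).1

/-- A path in Rado's sense inside the graph `G`: a set of vertices together with a
well-ordering such that the set of earlier neighbours of each vertex is cofinal below it. -/
structure RadoPath (G : SimpleGraph V) where
  verts : Set V
  lt : verts → verts → Prop
  wo : IsWellOrder verts lt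
  cofinal : ∀ v x : verts, lt x v → ∃ w : verts, G.Adj ↑w ↑v ∧ lt w v ∧ ¬ lt w x

/-- The order type of a Rado path. -/
noncomputable def RadoPath.otype {G : SimpleGraph V} (P : RadoPath G) : Ordinal.{u} :=
  @Ordinal.type P.verts P.lt P.wo

/-- `P` is concentrated on `A`: for every limit point `y` of `P` and every `x` below `y`,
the interval `[x, y)` contains a neighbour of `y` lying in `A`. -/
def RadoPath.ConcentratedOn {G : SimpleGraph V} (P : RadoPath G) (A : Set V) : Prop :=
  ∀ y : P.verts, ((∃ x, P.lt x y) ∧ ∀ x, P.lt x y → ∃ z, P.lt x z ∧ P.lt z y) →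
    ∀ x : P.verts, P.lt x y →
      ∃ w : P.verts, (↑w : V) ∈ A ∧ G.Adj ↑w ↑y ∧ ¬ P.lt w x ∧ P.lt w y

/-- The subgraph of `G` consisting of the edges of colour `i`. -/
def colGraph (G : SimpleGraph V) {r : ℕ} (c : Sym2 V → Fin r) (i : Fin r) :
    SimpleGraph V where
  Adj a b := G.Adj a b ∧ c s(a, b) = i
  symm := by
    constructor
    intro a b h
    refine ⟨h.1.symm, ?_⟩
    rw [Sym2.eq_swap]
    exact h.2
  loopless := by constructor; intro a h; exact G.irrefl h.1

/-- The restriction of `G` to the vertices in `S` (as a graph on the same vertex type). -/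
def restrictTo (G : SimpleGraph V) (S : Set V) : SimpleGraph V where
  Adj a b := G.Adj a b ∧ a ∈ S ∧ b ∈ S
  symm := by constructor; intro a b h; exact ⟨h.1.symm, h.2.2, h.2.1⟩
  loopless := by constructor; intro a h; exact G.irrefl h.1

/-- The common neighbourhood `N_G[X] = ⋂_{x ∈ X} N_G(x)`. -/
def commonNbhd (G : SimpleGraph V) (X : Set V) : Set V :=
  {v | ∀ x ∈ X, G.Adj x v}

/-- `G` is κ-complete: it has at least κ vertices and every vertex has fewer than κ
non-neighbours. -/
def KComplete (G : SimpleGraph V) (κ : Cardinal.{u}) : Prop :=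
  κ ≤ #V ∧ ∀ x : V, #{v : V | ¬ G.Adj x v} < κ

/-- `G` is of type `H_{κ,κ}` with decomposition `(A, B)`. -/
def IsHDecomp (G : SimpleGraph V) (κ : Cardinal.{u}) (A B : Set V) : Prop :=
  ∃ a b : Ordinal.{u} → V,
    Set.InjOn a (Set.Iio κ.ord) ∧ Set.InjOn b (Set.Iio κ.ord) ∧
    a '' Set.Iio κ.ord = A ∧ b '' Set.Iio κ.ord = B ∧
    ∀ ξ ζ : Ordinal.{u}, ξ ≤ ζ → ζ < κ.ord → G.Adj (a ξ) (b ζ)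

/-- `G` is of type `H_{κ,κ}` with main class `A`. -/
def IsHType (G : SimpleGraph V) (κ : Cardinal.{u}) (A : Set V) : Prop :=
  ∃ B : Set V, IsHDecomp G κ A B

/-- A finite family of increasing covers, witnessing that a set is (𝒜,κ)-centered. -/
structure CenteredWitness (V : Type u) where
  I : Type
  fin : Finite I
  lam : I → Ordinal.{u}
  fam : I → Ordinal.{u} → Set V

/-- An 𝒜-box: the intersection `⋂_{i ∈ I} A^i_{f i}`. -/
def CenteredWitness.Box (𝒜 : CenteredWitness V) (f : 𝒜.I → Ordinal.{u}) : Set V :=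
  ⋂ i, 𝒜.fam i (f i)

/-- `A` is (𝒜,κ)-centered in `G`. -/
def IsCentered (G : SimpleGraph V) (A : Set V) (𝒜 : CenteredWitness V)
    (κ : Cardinal.{u}) : Prop :=
  (∀ i, ∀ α β : Ordinal.{u}, α ≤ β → β < 𝒜.lam i → 𝒜.fam i α ⊆ 𝒜.fam i β) ∧
  (∀ i, A ⊆ ⋃ α ∈ Set.Iio (𝒜.lam i), 𝒜.fam i α) ∧
  (∀ f : 𝒜.I → Ordinal.{u}, (∀ i, f i < 𝒜.lam i) → κ ≤ #(commonNbhd G (𝒜.Box f)))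

/-- The set `S` carries a (finite or ω-type) path all of whose edges have colour `i`. -/
def CarriesPath {r : ℕ} (c : Sym2 ℕ → Fin r) (i : Fin r) (S : Set ℕ) : Prop :=
  (∃ l : List ℕ, l.Nodup ∧ (↑l.toFinset : Set ℕ) = S ∧
      l.Chain' (fun a b => c s(a, b) = i)) ∨
  (∃ f : ℕ → ℕ, Function.Injective f ∧ Set.range f = S ∧
      ∀ n : ℕ, c s(f n, f (n + 1)) = i)

/-
Fix a nonprincipal ultrafilter `U` on `ℕ`. Every vertex `v` has a colour `ultraColour v` in which
it is joined to `U`-almost every vertex. Grow one finite path per colour, keeping the invariant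
that the path of colour `i` ends in a vertex `e` with `ultraColour e = i`: at step `n`, if `n` is
not yet covered, append to the path of colour `i = ultraColour n` a fresh vertex `w` joined in
colour `i` both to its last vertex and to `n` (`U`-almost every `w` qualifies), and then `n`
itself. Each path of the limit is the union of an increasing chain of finite paths, hence a finite
or a one-way infinite path.
-/

open Filter Set Function

section
variable {r : ℕ} (c : Sym2 ℕ → Fin r)

theorem carriesPath_iUnion_of_isPrefix {i : Fin r} (L : ℕ → List ℕ)
    (hpre : ∀ m n, m ≤ n → L m <+: L n) (hnodup : ∀ n, (L n).Nodup)
    (hchain : ∀ n, (L n).IsChain fun a b => c s(a, b) = i) :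
    CarriesPath c i (⋃ n, {x | x ∈ L n}) := by
  by_cases hbdd : BddAbove (range fun n => (L n).length)
  · obtain ⟨N, hN⟩ := Nat.sSup_mem (range_nonempty _) hbdd
    have hmax : ∀ n, L n <+: L N := fun n => by
      have hle : (L (max n N)).length ≤ (L N).length :=
        (le_csSup hbdd (mem_range_self (max n N))).trans_eq hN.symm
      rw [(hpre N _ (le_max_right n N)).eq_of_length_le hle]
      exact hpre n _ (le_max_left n N)
    refine Or.inl ⟨L N, hnodup N, ?_, hchain N⟩
    ext x
    simp only [List.coe_toFinset, mem_ofPred_eq, mem_iUnion]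
    exact ⟨fun hx => ⟨N, hx⟩, fun ⟨n, hx⟩ => (hmax n).subset hx⟩
  · have hlong : ∀ k, ∃ n, k < (L n).length := by
      simpa [not_bddAbove_iff] using hbdd
    choose N hN using hlong
    set f : ℕ → ℕ := fun k => (L (N k))[k]'(hN k)
    have hf : ∀ k n (hk : k < (L n).length), f k = (L n)[k] := by
      intro k n hk
      rcases le_total (N k) n with h | h
      · exact (hpre _ _ h).getElem _
      · exact ((hpre _ _ h).getElem _).symm
    refine Or.inr ⟨f, fun a b hab => ?_, ?_, fun k => ?_⟩
    · have ha : a < (L (N (max a b))).length := (le_max_left a b).trans_lt (hN _)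
      have hb : b < (L (N (max a b))).length := (le_max_right a b).trans_lt (hN _)
      rwa [hf a _ ha, hf b _ hb, (hnodup _).getElem_inj_iff] at hab
    · ext x
      simp only [mem_range, mem_iUnion, mem_ofPred_eq]
      constructor
      · rintro ⟨k, rfl⟩
        exact ⟨N k, List.getElem_mem _⟩
      · rintro ⟨n, hx⟩
        obtain ⟨k, hk, rfl⟩ := List.getElem_of_mem hx
        exact ⟨k, hf k n hk⟩
    · have hk : k + 1 < (L (N (k + 1))).length := hN _
      rw [hf k _ (k.lt_succ_self.trans hk), hf (k + 1) _ hk]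
      exact (hchain _).getElem k hk

theorem exists_eventually_colour_eq (v : ℕ) :
    ∃ i, ∀ᶠ w in (hyperfilter ℕ : Filter ℕ), c s(v, w) = i :=
  Ultrafilter.eventually_exists_iff.mp (Eventually.of_forall fun _ => ⟨_, rfl⟩)

noncomputable def ultraColour (v : ℕ) : Fin r :=
  (exists_eventually_colour_eq c v).choose

theorem eventually_colour_eq_ultraColour (v : ℕ) :
    ∀ᶠ w in (hyperfilter ℕ : Filter ℕ), c s(v, w) = ultraColour c v :=
  (exists_eventually_colour_eq c v).choose_spec

structure IsPathFamily (s : Fin r → List ℕ) : Prop where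
  nodup : ∀ i, (s i).Nodup
  isChain : ∀ i, (s i).IsChain fun a b => c s(a, b) = i
  ultraColour_getLast : ∀ i, ∀ e ∈ (s i).getLast?, ultraColour c e = i
  eq_of_mem : ∀ i j x, x ∈ s i → x ∈ s j → i = j

def IsConnector (s : Fin r → List ℕ) (v w : ℕ) : Prop :=
  (∀ i, w ∉ s i) ∧ w ≠ v ∧ c s(w, v) = ultraColour c v ∧
    ∀ e ∈ (s (ultraColour c v)).getLast?, c s(e, w) = ultraColour c v

theorem IsPathFamily.exists_isConnector {s : Fin r → List ℕ} (hs : IsPathFamily c s) (v : ℕ) :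
    ∃ w, IsConnector c s v w := by
  have hfresh : ∀ᶠ w in (hyperfilter ℕ : Filter ℕ), w ∉ insert v (⋃ i, {x | x ∈ s i}) :=
    ((finite_iUnion fun i => (s i).finite_toSet).insert v).compl_mem_hyperfilter
  have hv : ∀ᶠ w in (hyperfilter ℕ : Filter ℕ), c s(w, v) = ultraColour c v :=
    (eventually_colour_eq_ultraColour c v).mono fun w hw => by rwa [Sym2.eq_swap]
  have hlast : ∀ᶠ w in (hyperfilter ℕ : Filter ℕ),
      ∀ e ∈ (s (ultraColour c v)).getLast?, c s(e, w) = ultraColour c v := by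
    cases he : (s (ultraColour c v)).getLast? with
    | none => simp
    | some e =>
      simpa [hs.ultraColour_getLast _ e he] using eventually_colour_eq_ultraColour c e
  obtain ⟨w, hw, hwv, hwlast⟩ := (hfresh.and (hv.and hlast)).exists
  simp only [mem_insert_iff, mem_iUnion, mem_ofPred_eq, not_or, not_exists] at hw
  exact ⟨w, hw.2, hw.1, hwv, hwlast⟩

theorem IsPathFamily.update_append {s : Fin r → List ℕ} (hs : IsPathFamily c s) {v w : ℕ}
    (hw : IsConnector c s v w) (hv : ∀ i, v ∉ s i) :
    IsPathFamily c (update s (ultraColour c v) (s (ultraColour c v) ++ [w, v])) := by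
  obtain ⟨hwfresh, hwv, hwcol, hwlast⟩ := hw
  have hmem : ∀ i x, x ∈ update s (ultraColour c v) (s (ultraColour c v) ++ [w, v]) i →
      x ∈ s i ∨ i = ultraColour c v ∧ (x = w ∨ x = v) := by
    intro i x hx
    rcases eq_or_ne i (ultraColour c v) with rfl | hi
    · simpa [or_iff_not_imp_left] using hx
    · exact Or.inl (by simpa [hi] using hx)
  have hold : ∀ i x, x ∈ s i → x ≠ w ∧ x ≠ v := fun i x hx =>
    ⟨fun h => hwfresh i (h ▸ hx), fun h => hv i (h ▸ hx)⟩
  constructor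
  · intro i
    rcases eq_or_ne i (ultraColour c v) with rfl | hi
    · rw [update_self, List.nodup_append]
      refine ⟨hs.nodup _, by simpa using hwv, fun x hx y hy => ?_⟩
      rcases List.mem_pair.1 hy with rfl | rfl
      exacts [(hold _ x hx).1, (hold _ x hx).2]
    · simpa [hi] using hs.nodup i
  · intro i
    rcases eq_or_ne i (ultraColour c v) with rfl | hi
    · simp only [update_self]
      refine (hs.isChain _).append (List.isChain_pair.2 hwcol) fun x hx y hy => ?_
      obtain rfl : y = w := by simpa using hy.symm
      exact hwlast x hx
    · simpa [hi] using hs.isChain i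
  · intro i e he
    rcases eq_or_ne i (ultraColour c v) with rfl | hi
    · obtain rfl : e = v := by simpa using he.symm
      rfl
    · exact hs.ultraColour_getLast i e (by simpa [hi] using he)
  · intro i j x hxi hxj
    rcases hmem i x hxi with hi | ⟨rfl, hx⟩ <;> rcases hmem j x hxj with hj | ⟨rfl, hx⟩
    · exact hs.eq_of_mem i j x hi hj
    · exact (hx.elim (hold i x hi).1 (hold i x hi).2).elim
    · exact (hx.elim (hold j x hj).1 (hold j x hj).2).elim
    · rfl

noncomputable def extendPaths (s : Fin r → List ℕ) (v : ℕ) : Fin r → List ℕ :=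
  if ∃ i, v ∈ s i then s
  else update s (ultraColour c v)
    (s (ultraColour c v) ++ [Classical.epsilon (IsConnector c s v), v])

theorem isPathFamily_extendPaths {s : Fin r → List ℕ} (hs : IsPathFamily c s) (v : ℕ) :
    IsPathFamily c (extendPaths c s v) := by
  unfold extendPaths
  split_ifs with hv
  · exact hs
  · exact hs.update_append c (Classical.epsilon_spec (hs.exists_isConnector c v))
      (not_exists.1 hv)

theorem isPrefix_extendPaths (s : Fin r → List ℕ) (v : ℕ) (i : Fin r) :
    s i <+: extendPaths c s v i := by
  unfold extendPaths
  split_ifs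
  · exact List.prefix_refl _
  · rw [update_apply]
    split_ifs with hi
    · subst hi
      exact List.prefix_append _ _
    · exact List.prefix_refl _

theorem exists_mem_extendPaths (s : Fin r → List ℕ) (v : ℕ) : ∃ i, v ∈ extendPaths c s v i := by
  unfold extendPaths
  split_ifs with hv
  · exact hv
  · exact ⟨ultraColour c v, by simp⟩

noncomputable def pathStage : ℕ → Fin r → List ℕ
  | 0 => fun _ => []
  | n + 1 => extendPaths c (pathStage n) n

theorem isPathFamily_pathStage (n : ℕ) : IsPathFamily c (pathStage c n) := by
  induction n with
  | zero => constructor <;> simp [pathStage]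
  | succ n ih => exact isPathFamily_extendPaths c ih n

theorem isPrefix_pathStage {m n : ℕ} (h : m ≤ n) (i : Fin r) :
    pathStage c m i <+: pathStage c n i := by
  induction n, h using Nat.le_induction with
  | base => exact List.prefix_refl _
  | succ n _ ih => exact ih.trans (isPrefix_extendPaths c _ n i)

theorem exists_partition_carriesPath :
    ∃ P : Fin r → Set ℕ, Pairwise (Disjoint on P) ∧ ⋃ i, P i = Set.univ ∧
      ∀ i, CarriesPath c i (P i) := by
  refine ⟨fun i => ⋃ n, {x | x ∈ pathStage c n i}, fun i j hij => ?_, ?_, fun i => ?_⟩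
  · simp only [onFun, disjoint_left, mem_iUnion, mem_ofPred_eq]
    rintro x ⟨m, hm⟩ ⟨n, hn⟩
    exact hij <| (isPathFamily_pathStage c (max m n)).eq_of_mem i j x
      ((isPrefix_pathStage c (le_max_left m n) i).subset hm)
      ((isPrefix_pathStage c (le_max_right m n) j).subset hn)
  · refine eq_univ_of_forall fun x => ?_
    obtain ⟨i, hi⟩ := exists_mem_extendPaths c (pathStage c x) x
    exact mem_iUnion.2 ⟨i, mem_iUnion.2 ⟨x + 1, hi⟩⟩
  · exact carriesPath_iUnion_of_isPrefix c _ (fun m n h => isPrefix_pathStage c h i)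
      (fun n => (isPathFamily_pathStage c n).nodup i)
      (fun n => (isPathFamily_pathStage c n).isChain i)

end

/-- Erdős' theorem: for any 2-edge colouring of the complete graph on ℕ,
the vertices can be partitioned into a path of colour 0 and a path of colour 1. -/
theorem stmt3 (c : Sym2 ℕ → Fin 2) :
    ∃ P₀ P₁ : Set ℕ, Disjoint P₀ P₁ ∧ P₀ ∪ P₁ = Set.univ ∧
      CarriesPath c 0 P₀ ∧ CarriesPath c 1 P₁ := by
  obtain ⟨P, hdisj, hcover, hpath⟩ := exists_partition_carriesPath c
  refine ⟨P 0, P 1, hdisj (by decide), ?_, hpath 0, hpath 1⟩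
  simpa [eq_univ_iff_forall, Fin.exists_fin_two] using hcover
end

section
/- If P is a path (in Rado's sense) witnessed by a well ordering of order type ω₁, then the set A = {v ∈ V(P) : |N_P(v)| = ω₁} is uncountable, and moreover A is ω₁-unseparable in P: any two distinct vertices of A are joined by ω₁ many finite paths in P intersecting pairwise only in their endpoints. -/
open Cardinal

universe u

variable {V : Type u}

/-!
Any countable set of vertices is bounded, since below each vertex only countably many lie.
If the vertices of uncountable degree were bounded by `b`, take a closure point `δ > b` of a map
sending every vertex to a bound of its (then countable) neighbourhood: an earlier neighbour
`u ≥ b` of `δ` has `δ` as a neighbour, although all its neighbours lie below `δ`.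
For distinct `v, w` of uncountable degree and a countable set `S`, go from `v` to a neighbour
above `S`, climb through earlier neighbours to a neighbour of `w`, and step to `w`: this path
meets `S` only in its ends. So a maximal family of internally disjoint `v`-`w` paths
(Zorn) is uncountable.
-/

theorem Cardinal.mk_set_eq_aleph_one_iff {α : Type u} (hα : #α = ℵ₁) {s : Set α} :
    #s = ℵ₁ ↔ ¬ s.Countable := by
  rw [← le_aleph0_iff_set_countable, ← lt_aleph_one_iff, not_lt, ← hα]
  exact ⟨fun h => h.ge, fun h => (mk_set_le s).antisymm h⟩

theorem countable_setOf_lt_of_type_eq_ord_aleph_one {α : Type u} {r : α → α → Prop}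
    [IsWellOrder α r] (h : Ordinal.type r = (ℵ₁).ord) (a : α) : {b | r b a}.Countable := by
  rw [← le_aleph0_iff_set_countable, ← lt_aleph_one_iff]
  change (Ordinal.typein r a).card < _
  rw [← lt_ord, ← h]
  exact Ordinal.typein_lt_type r a

section OmegaOneLike

variable {α : Type u} [LinearOrder α]

theorem countable_Iic_of_forall_countable_Iio (hIio : ∀ a : α, (Set.Iio a).Countable) (a : α) :
    (Set.Iic a).Countable := by
  rw [← Set.Iio_insert]
  exact (hIio a).insert a

theorem exists_mem_gt_of_not_countable (hIio : ∀ a : α, (Set.Iio a).Countable) {s : Set α}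
    (hs : ¬ s.Countable) (b : α) : ∃ u ∈ s, b < u := by
  by_contra! h
  exact hs ((countable_Iic_of_forall_countable_Iio hIio b).mono h)

theorem exists_forall_lt_of_countable [Uncountable α] (hIio : ∀ a : α, (Set.Iio a).Countable)
    {S : Set α} (hS : S.Countable) : ∃ b, ∀ s ∈ S, s < b := by
  by_contra! h
  have hcover : Set.univ ⊆ ⋃ s ∈ S, Set.Iic s := fun b _ => by simpa using h b
  exact Set.not_countable_univ
    ((hS.biUnion fun s _ => countable_Iic_of_forall_countable_Iio hIio s).mono hcover)

/-- `δ` is the supremum of `b, next b, next (next b), …`, where `next d` bounds `f` on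
`Iic d`. -/
theorem exists_gt_mapsTo_Iio [WellFoundedLT α] [Uncountable α]
    (hIio : ∀ a : α, (Set.Iio a).Countable) (f : α → α) (b : α) :
    ∃ δ, b < δ ∧ Set.MapsTo f (Set.Iio δ) (Set.Iio δ) := by
  have hstep : ∀ d, ∃ e, ∀ x ≤ d, f x < e := fun d =>
    (exists_forall_lt_of_countable hIio
      ((countable_Iic_of_forall_countable_Iio hIio d).image f)).imp
      fun e he x hx => he _ ⟨x, hx, rfl⟩
  choose next hnext using hstep
  obtain ⟨δ, hδ, hδmin⟩ := wellFounded_lt.has_min {d | ∀ n, next^[n] b < d}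
    ((exists_forall_lt_of_countable hIio (Set.countable_range fun n => next^[n] b)).imp
      fun d hd n => hd _ ⟨n, rfl⟩)
  refine ⟨δ, hδ 0, fun u hu => ?_⟩
  obtain ⟨n, hn⟩ : ∃ n, u ≤ next^[n] b := by
    by_contra! h
    exact hδmin u h hu
  calc f u < next^[n + 1] b := by rw [Function.iterate_succ_apply']; exact hnext _ _ hn
    _ < δ := hδ _

end OmegaOneLike

namespace SimpleGraph

variable {G : SimpleGraph V} {v w : V}

theorem exists_aleph_one_le_pairwise_intDisjoint
    (h : ∀ S : Set V, S.Countable → ∃ p : G.Path v w,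
      (∃ x ∈ p.1.support, x ∉ S) ∧ ∀ y ∈ p.1.support, y ∈ S → y = v ∨ y = w) :
    ∃ F : Set (G.Path v w), ℵ₁ ≤ #F ∧ F.Pairwise fun p q => IntDisjoint p.1 q.1 := by
  obtain ⟨F, hF⟩ := zorn_subset {F : Set (G.Path v w) | F.Pairwise fun p q => IntDisjoint p.1 q.1}
    fun c hcS hc => ⟨⋃₀ c, hc.pairwise_sUnion.2 hcS, fun _ => Set.subset_sUnion_of_mem⟩
  refine ⟨F, ?_, hF.prop⟩
  rw [← not_lt, lt_aleph_one_iff, le_aleph0_iff_set_countable]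
  intro hFc
  set S := ⋃ p ∈ F, {x | x ∈ p.1.support}
  obtain ⟨q, ⟨x, hxq, hxS⟩, hqS⟩ :=
    h S (hFc.biUnion fun p _ => p.1.support.finite_toSet.countable)
  have hqF : q ∉ F := fun hq => hxS (Set.mem_biUnion hq hxq)
  refine hqF (hF.mem_of_prop_insert (hF.prop.insert fun p hp _ => ⟨?_, ?_⟩))
  · exact fun y hyq hyp => hqS y hyq (Set.mem_biUnion hp hyp)
  · exact fun y hyp hyq => hqS y hyq (Set.mem_biUnion hp hyp)



section LinearOrder

variable {α : Type u} [LinearOrder α]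

/-- The defining property of a path in Rado's sense. -/
def EarlierNeighborsCofinal (P : SimpleGraph α) : Prop :=
  ∀ v x : α, x < v → ∃ w, P.Adj w v ∧ w < v ∧ x ≤ w

variable {P : SimpleGraph α}

theorem exists_walk_support_subset_Icc [WellFoundedLT α]
    (hcof : P.EarlierNeighborsCofinal) {x z : α} (hxz : x ≤ z) :
    ∃ p : P.Walk x z, ∀ s ∈ p.support, s ∈ Set.Icc x z := by
  induction z using WellFoundedLT.induction with
  | _ z ih =>
  rcases hxz.eq_or_lt with rfl | hxz
  · exact ⟨.nil, by simp⟩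
  obtain ⟨u, hu, huz, hxu⟩ := hcof z x hxz
  obtain ⟨p, hp⟩ := ih u huz hxu
  refine ⟨p.concat hu, fun s hs => ?_⟩
  rw [Walk.support_concat, List.mem_append, List.mem_singleton] at hs
  rcases hs with hs | rfl
  · exact ⟨(hp s hs).1, (hp s hs).2.trans huz.le⟩
  · exact ⟨hxz.le, le_rfl⟩

theorem exists_path_avoiding_of_not_countable [WellFoundedLT α] [Uncountable α]
    (hIio : ∀ a : α, (Set.Iio a).Countable)
    (hcof : P.EarlierNeighborsCofinal) {v w : α}
    (hv : ¬ (P.neighborSet v).Countable) (hw : ¬ (P.neighborSet w).Countable) (hvw : v ≠ w)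
    {S : Set α} (hS : S.Countable) :
    ∃ p : P.Path v w, (∃ x ∈ p.1.support, x ∉ S) ∧ ∀ y ∈ p.1.support, y ∈ S → y = v ∨ y = w := by
  obtain ⟨b, hb⟩ := exists_forall_lt_of_countable hIio ((hS.insert v).insert w)
  obtain ⟨v', hvv' : P.Adj v v', hbv'⟩ := exists_mem_gt_of_not_countable hIio hv b
  obtain ⟨w', hww' : P.Adj w w', hv'w'⟩ := exists_mem_gt_of_not_countable hIio hw v'
  obtain ⟨q, hq⟩ := exists_walk_support_subset_Icc hcof hv'w'.le
  have hq_gt : ∀ s ∈ q.bypass.support, b < s := fun s hs =>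
    hbv'.trans_le (hq s (q.support_bypass_subset_support hs)).1
  have hv_q : v ∉ q.bypass.support := fun h => (hq_gt v h).not_gt (hb v (by simp))
  have hw_q : w ∉ q.bypass.support := fun h => (hq_gt w h).not_gt (hb w (by simp))
  let p : P.Walk v w := .cons hvv' (q.bypass.concat hww'.symm)
  have hsupp : ∀ y, y ∈ p.support ↔ y = v ∨ y ∈ q.bypass.support ∨ y = w := by
    simp [p, Walk.support_concat]
  have hp : p.IsPath := by
    refine (Walk.cons_isPath_iff _ _).2 ⟨q.bypass_isPath.concat hw_q _, ?_⟩
    simp [Walk.support_concat, hv_q, hvw]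
  refine ⟨⟨p, hp⟩, ⟨v', (hsupp v').2 (.inr (.inl q.bypass.start_mem_support)),
    fun h => hbv'.not_gt (hb v' (by simp [h]))⟩, fun y hy hyS => ?_⟩
  rcases (hsupp y).1 hy with rfl | hy | rfl
  · exact .inl rfl
  · exact ((hq_gt y hy).not_gt (hb y (by simp [hyS]))).elim
  · exact .inr rfl

theorem not_countable_setOf_not_countable_neighborSet [WellFoundedLT α] [Uncountable α]
    (hIio : ∀ a : α, (Set.Iio a).Countable)
    (hcof : P.EarlierNeighborsCofinal) :
    ¬ {v | ¬ (P.neighborSet v).Countable}.Countable := by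
  intro hA
  obtain ⟨b, hb⟩ := exists_forall_lt_of_countable hIio hA
  have hbound : ∀ u, ∃ c, (P.neighborSet u).Countable → ∀ x ∈ P.neighborSet u, x < c := by
    intro u
    by_cases hu : (P.neighborSet u).Countable
    · exact (exists_forall_lt_of_countable hIio hu).imp fun c hc _ => hc
    · exact ⟨u, fun h => absurd h hu⟩
  choose f hf using hbound
  obtain ⟨δ, hbδ, hδ⟩ := exists_gt_mapsTo_Iio hIio f b
  obtain ⟨u, huδ, hu, hbu⟩ := hcof δ b hbδ
  have hu_countable : (P.neighborSet u).Countable := by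
    by_contra h
    exact (hb u h).not_ge hbu
  exact (hf u hu_countable δ huδ).not_gt (hδ hu)

end LinearOrder

end SimpleGraph

/-- In a Rado path of order type ω₁, the set of vertices of degree ω₁ is
uncountable and ω₁-unseparable. -/
theorem stmt6 {V : Type} (P : SimpleGraph V) (lt : V → V → Prop)
    (wo : IsWellOrder V lt)
    (htype : @Ordinal.type V lt wo = (Cardinal.aleph 1).ord)
    (hcof : ∀ v x : V, lt x v → ∃ w : V, P.Adj w v ∧ lt w v ∧ ¬ lt w x) :
    ¬ ({v : V | #(P.neighborSet v) = Cardinal.aleph 1}).Countable ∧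
    Unseparable P {v : V | #(P.neighborSet v) = Cardinal.aleph 1}
      (Cardinal.aleph 1) := by
  classical
  let := linearOrderOfSTO lt
  have : WellFoundedLT V := ⟨wo.wf⟩
  have hIio : ∀ a : V, (Set.Iio a).Countable := countable_setOf_lt_of_type_eq_ord_aleph_one htype
  have hV : #V = ℵ₁ := by simpa using congrArg Ordinal.card htype
  have : Uncountable V := aleph0_lt_mk_iff.1 (hV ▸ aleph0_lt_aleph_one)
  have hcof' : P.EarlierNeighborsCofinal := fun v x hxv =>
    (hcof v x hxv).imp fun _ ⟨hadj, hlt, hge⟩ => ⟨hadj, hlt, not_lt.1 hge⟩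
  simp_rw [mk_set_eq_aleph_one_iff hV]
  exact ⟨SimpleGraph.not_countable_setOf_not_countable_neighborSet hIio hcof',
    fun v hv w hw hvw => SimpleGraph.exists_aleph_one_le_pairwise_intDisjoint fun S hS =>
      SimpleGraph.exists_path_avoiding_of_not_countable hIio hcof' hv hw hvw hS⟩
end

section
/- Let κ be an infinite cardinal and G a graph of type H_{κ,κ} with main class V(G) (i.e., V(G) = {a_ξ : ξ < κ} and there is an injective enumeration {b_ξ : ξ < κ} of a subset B ⊆ V(G) such that {a_ξ, b_ζ} is an edge whenever ξ ≤ ζ < κ). Then G contains an induced subgraph G' on κ vertices which is κ-complete, i.e., |V(G') \ N_{G'}(x)| < κ for all x ∈ V(G'). Conversely, every κ-complete graph of size κ is of type H_{κ,κ} with main class its full vertex set. -/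
open Cardinal

universe u

variable {V : Type u}

/-!
If `G` has type `H_{κ,κ}` with main class `V = {a_ξ}`, the class `B = {b_ζ}` induces a
κ-complete graph: `a_ξ` is adjacent to every `b_ζ` with `ζ ≥ ξ`, so it misses at most the
`|ξ| < κ` vertices `b_ζ`, `ζ < ξ`.

Conversely, let `G` be κ-complete with `|V| = κ`. As κ may be singular, an arbitrary
enumeration of `V` will not do: enumerate `V` instead by increasing `max(|V \ N(v)|, index v)`.
All initial segments of this order are small, so it has type `κ`, and along each initial
segment `{a_ξ : ξ ≤ ζ}` the numbers of non-neighbours are bounded by some `μ < κ`. Hence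
these vertices have at most `|ζ| · μ < κ` common non-neighbours, and `b_ζ` can be chosen
recursively as a common neighbour of them different from all earlier `b_ξ`.
-/

open Set

theorem mk_image_Iio_le (f : Ordinal.{u} → V) (o : Ordinal.{u}) : #(f '' Iio o) ≤ o.card := by
  have h := mk_image_le_lift (f := f) (s := Iio o)
  rwa [mk_Iio_ordinal, lift_lift, lift_le] at h

theorem mk_image_Iio_of_injOn {f : Ordinal.{u} → V} {o : Ordinal.{u}} (hf : InjOn f (Iio o)) :
    #(f '' Iio o) = o.card := by
  have h := mk_image_eq_of_injOn_lift f (Iio o) hf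
  rwa [mk_Iio_ordinal, lift_lift, lift_inj] at h

theorem mk_setOf_lt_le_of_injective {f : V → Ordinal.{u}} (hf : Function.Injective f)
    (o : Ordinal.{u}) : #{v | f v < o} ≤ o.card := by
  have h := lift_mk_le_lift_mk_of_injective (f := fun v : {v | f v < o} => (⟨f v, v.2⟩ : Iio o))
    fun v w hvw => Subtype.ext (hf (congrArg Subtype.val hvw))
  rwa [mk_Iio_ordinal, lift_lift, lift_le] at h

theorem type_eq_ord_of_forall_mk_lt {κ : Cardinal.{u}} (hV : #V = κ) (r : V → V → Prop)
    [IsWellOrder V r] (h : ∀ v, #{w // r w v} < κ) : Ordinal.type r = κ.ord := by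
  refine le_antisymm (not_lt.mp fun hlt => ?_) (ord_le.mpr (by rw [Ordinal.card_type, hV]))
  obtain ⟨v, hv⟩ := Ordinal.typein_surj r hlt
  have := h v
  rw [← Ordinal.card_typein, hv, card_ord] at this
  exact this.false

theorem exists_enum_of_forall_mk_lt [Nonempty V] {κ : Cardinal.{u}} (hV : #V = κ)
    (r : V → V → Prop) [IsWellOrder V r] (h : ∀ v, #{w // r w v} < κ) :
    ∃ a : Ordinal.{u} → V, InjOn a (Iio κ.ord) ∧ a '' Iio κ.ord = Set.univ ∧
      ∀ ξ ζ, ξ ≤ ζ → ζ < κ.ord → ¬ r (a ζ) (a ξ) := by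
  rw [← type_eq_ord_of_forall_mk_lt hV r h]
  set a := Function.invFun (Ordinal.typein r)
  have ha : ∀ v, a (Ordinal.typein r v) = v :=
    Function.leftInverse_invFun (Ordinal.typein_injective r)
  have htypein : ∀ ξ < Ordinal.type r, Ordinal.typein r (a ξ) = ξ := fun ξ hξ => by
    obtain ⟨v, rfl⟩ := Ordinal.typein_surj r hξ
    rw [ha]
  refine ⟨a, fun ξ hξ ζ hζ h => ?_, ?_, fun ξ ζ hξζ hζ => ?_⟩
  · rw [← htypein ξ hξ, ← htypein ζ hζ, h]
  · exact eq_univ_of_forall fun v => ⟨_, Ordinal.typein_lt_type r v, ha v⟩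
  · rw [← Ordinal.typein_lt_typein r, htypein ζ hζ, htypein ξ (hξζ.trans_lt hζ)]
    exact not_lt.mpr hξζ

theorem exists_enum_bounded_on_initial_segments [Nonempty V] {κ : Cardinal.{u}}
    (hκ : ℵ₀ ≤ κ) (hV : #V = κ) (g : V → Cardinal.{u}) (hg : ∀ v, g v < κ) :
    ∃ a : Ordinal.{u} → V, InjOn a (Iio κ.ord) ∧ a '' Iio κ.ord = Set.univ ∧
      ∀ ζ < κ.ord, ∃ μ < κ, ∀ ξ ≤ ζ, g (a ξ) ≤ μ := by
  obtain ⟨r, _, hr⟩ := Cardinal.exists_ord_eq V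
  rw [hV] at hr
  let key v := max (g v).ord (Ordinal.typein r v)
  have hkey : ∀ v, key v < κ.ord := fun v =>
    max_lt (ord_lt_ord.mpr (hg v)) (hr ▸ Ordinal.typein_lt_type r v)
  have hinj : Function.Injective fun v => (key v, Ordinal.typein r v) := fun v w hvw =>
    Ordinal.typein_injective r (congrArg Prod.snd hvw)
  let s := InvImage (Prod.Lex (· < ·) (· < ·)) fun v => (key v, Ordinal.typein r v)
  have : IsWellOrder V s := (RelEmbedding.preimage ⟨_, hinj⟩ _).isWellOrder
  have hs : ∀ v, #{w // s w v} < κ := fun v => by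
    have hsub : {w | s w v} ⊆ {w | Ordinal.typein r w < Order.succ (key v)} := fun w hw => by
      show Ordinal.typein r w < Order.succ (key v)
      refine Order.lt_succ_iff.mpr ((le_max_right (g w).ord _).trans ?_)
      rcases Prod.lex_iff.mp hw with h | ⟨h, -⟩
      exacts [h.le, h.le]
    calc #{w // s w v} ≤ #{w | Ordinal.typein r w < Order.succ (key v)} := mk_le_mk_of_subset hsub
      _ ≤ (Order.succ (key v)).card := mk_setOf_lt_le_of_injective (Ordinal.typein_injective r) _
      _ < κ := lt_ord.mp ((isSuccLimit_ord hκ).succ_lt (hkey v))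
  obtain ⟨a, ha_inj, ha_univ, ha_mono⟩ := exists_enum_of_forall_mk_lt hV s hs
  refine ⟨a, ha_inj, ha_univ, fun ζ hζ => ⟨(key (a ζ)).card, lt_ord.mp (hkey _), fun ξ hξ => ?_⟩⟩
  have hle : key (a ξ) ≤ key (a ζ) := not_lt.mp fun hlt => ha_mono ξ ζ hξ hζ (Prod.Lex.left _ _ hlt)
  calc g (a ξ) = (g (a ξ)).ord.card := (card_ord _).symm
    _ ≤ (key (a ξ)).card := Ordinal.card_le_card (le_max_left _ _)
    _ ≤ (key (a ζ)).card := Ordinal.card_le_card hle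

theorem exists_injOn_forall_mem [Nonempty V] {κ : Cardinal.{u}} (C : Ordinal.{u} → Set V)
    (hC : ∀ ζ < κ.ord, κ ≤ #(C ζ)) :
    ∃ b : Ordinal.{u} → V, InjOn b (Iio κ.ord) ∧ ∀ ζ < κ.ord, b ζ ∈ C ζ := by
  let b : Ordinal.{u} → V := Ordinal.lt_wf.fix fun ζ ih =>
    Classical.epsilon fun v => v ∈ C ζ ∧ ∀ ξ (h : ξ < ζ), ih ξ h ≠ v
  have hfix : ∀ ζ, b ζ = Classical.epsilon fun v => v ∈ C ζ ∧ ∀ ξ < ζ, b ξ ≠ v :=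
    fun ζ => Ordinal.lt_wf.fix_eq _ ζ
  have hb : ∀ ζ < κ.ord, b ζ ∈ C ζ ∧ ∀ ξ < ζ, b ξ ≠ b ζ := fun ζ hζ => by
    rw [hfix ζ]
    refine Classical.epsilon_spec (p := fun v => v ∈ C ζ ∧ ∀ ξ < ζ, b ξ ≠ v) ?_
    have hfresh : ¬ C ζ ⊆ b '' Iio ζ := fun hsub =>
      ((mk_le_mk_of_subset hsub).trans (mk_image_Iio_le b ζ)).not_gt
        ((lt_ord.mp hζ).trans_le (hC ζ hζ))
    obtain ⟨v, hv, hvb⟩ := not_subset.mp hfresh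
    exact ⟨v, hv, fun ξ hξ h => hvb ⟨ξ, hξ, h⟩⟩
  refine ⟨b, fun ξ hξ ζ hζ h => ?_, fun ζ hζ => (hb ζ hζ).1⟩
  rcases lt_trichotomy ξ ζ with hlt | heq | hgt
  exacts [absurd h ((hb ζ hζ).2 ξ hlt), heq, absurd h.symm ((hb ξ hξ).2 ζ hgt)]

section Graph

variable {G : SimpleGraph V} {κ : Cardinal.{u}}

theorem compl_commonNbhd (G : SimpleGraph V) (X : Set V) :
    (commonNbhd G X)ᶜ = ⋃ x ∈ X, {v | ¬ G.Adj x v} := by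
  ext v
  simp [commonNbhd]

theorem mk_compl_commonNbhd_lt (hκ : ℵ₀ ≤ κ) {X : Set V} (hX : #X < κ) {μ : Cardinal.{u}}
    (hμ : μ < κ) (h : ∀ x ∈ X, #{v | ¬ G.Adj x v} ≤ μ) : #((commonNbhd G X)ᶜ : Set V) < κ := by
  rw [compl_commonNbhd]
  calc #(⋃ x ∈ X, {v | ¬ G.Adj x v}) ≤ #X * ⨆ x : X, #{v | ¬ G.Adj x v} := mk_biUnion_le _ _
    _ ≤ #X * μ := by gcongr; exact ciSup_le' fun x => h x x.2
    _ < κ := mul_lt_of_lt hκ hX hμ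

theorem IsHDecomp.kComplete_induce {B : Set V} (h : IsHDecomp G κ univ B) :
    #B = κ ∧ KComplete (G.induce B) κ := by
  obtain ⟨a, b, -, hb_inj, ha_univ, rfl, hadj⟩ := h
  have hB : #(b '' Iio κ.ord) = κ := by rw [mk_image_Iio_of_injOn hb_inj, card_ord]
  refine ⟨hB, hB.ge, fun x => ?_⟩
  obtain ⟨ξ, hξ, hx⟩ : (x : V) ∈ a '' Iio κ.ord := ha_univ ▸ mem_univ _
  have hsub : Subtype.val '' {v | ¬ (G.induce (b '' Iio κ.ord)).Adj x v} ⊆ b '' Iio ξ := by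
    rintro _ ⟨⟨_, ζ, hζ, rfl⟩, hv, rfl⟩
    refine ⟨ζ, show ζ < ξ from not_le.mp fun hξζ => hv ?_, rfl⟩
    have := hadj ξ ζ hξζ hζ
    rwa [hx] at this
  calc #{v | ¬ (G.induce (b '' Iio κ.ord)).Adj x v}
      = #(Subtype.val '' {v | ¬ (G.induce (b '' Iio κ.ord)).Adj x v}) :=
        (mk_image_eq Subtype.val_injective).symm
    _ ≤ #(b '' Iio ξ) := mk_le_mk_of_subset hsub
    _ ≤ ξ.card := mk_image_Iio_le b ξ
    _ < κ := lt_ord.mp hξ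

theorem isHType_univ_of_kComplete (hκ : ℵ₀ ≤ κ) (hV : #V = κ) (hG : KComplete G κ) :
    IsHType G κ univ := by
  have : Infinite V := infinite_iff.mpr (hV ▸ hκ)
  obtain ⟨a, ha_inj, ha_univ, ha_bdd⟩ :=
    exists_enum_bounded_on_initial_segments hκ hV (fun x => #{v | ¬ G.Adj x v}) hG.2
  have hC : ∀ ζ < κ.ord, κ ≤ #(commonNbhd G (a '' Iic ζ)) := fun ζ hζ => by
    obtain ⟨μ, hμ, hbdd⟩ := ha_bdd ζ hζ
    have hX : #(a '' Iic ζ) < κ := by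
      rw [← Order.Iio_succ]
      exact (mk_image_Iio_le a _).trans_lt (lt_ord.mp ((isSuccLimit_ord hκ).succ_lt hζ))
    have hsmall := mk_compl_commonNbhd_lt hκ hX hμ (by rintro _ ⟨ξ, hξ, rfl⟩; exact hbdd ξ hξ)
    rw [← hV] at hsmall ⊢
    rw [← mk_compl_of_infinite _ hsmall, compl_compl]
  obtain ⟨b, hb_inj, hb⟩ := exists_injOn_forall_mem _ hC
  exact ⟨_, a, b, ha_inj, hb_inj, ha_univ, rfl, fun ξ ζ hξζ hζ => hb ζ hζ _ ⟨ξ, hξζ, rfl⟩⟩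

end Graph

/-- Graphs of type H_{κ,κ} with main class the whole vertex set contain
κ-complete induced subgraphs on κ vertices; conversely every κ-complete graph of size κ
is of type H_{κ,κ} with main class its vertex set. -/
theorem stmt8 {V : Type u} (κ : Cardinal.{u}) (hκ : ℵ₀ ≤ κ) (G : SimpleGraph V) :
    (IsHType G κ Set.univ → ∃ S : Set V, #S = κ ∧ KComplete (G.induce S) κ) ∧
    (#V = κ → KComplete G κ → IsHType G κ Set.univ) :=
  ⟨fun ⟨B, hB⟩ => ⟨B, hB.kComplete_induce⟩, fun hV hG => isHType_univ_of_kComplete hκ hV hG⟩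
end
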